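/- For the exclusion game constructed from dual-feasible operators, and for every state ρ' and every POVM set 𝕄'_{A|X} with outcome set {1,…,l} and input set {1,…,κ}: P^E_err(p, Ψ_{B|Y}, ρ', 𝕄'_{A|X}) ≤ β · tr[Y^ρ ρ'] · ∑_{y=1}^{κ} ∑_{b=1}^{l} tr[M'_{b|y} Y_{b|y}]. -/

import Mathlib

open scoped BigOperators ComplexOrder

noncomputable section

namespace MultiObject

abbrev Mat (d : ℕ) := Matrix (Fin d) (Fin d) ℂ

/-- A quantum state: positive semidefinite with unit trace. -/
def IsState {d : ℕ} (ρ : Mat d) : Prop := ρ.PosSemidef ∧ ρ.trace = 1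

/-- A POVM set `M x a` indexed by input `x : Fin κ` and outcome `a : Fin l`. -/
def IsPOVMSet {d l κ : ℕ} (M : Fin κ → Fin l → Mat d) : Prop :=
  (∀ x a, (M x a).PosSemidef) ∧ (∀ x, ∑ a, M x a = 1)

/-- A probability mass function on a finite type. -/
def IsPMF {n : ℕ} (p : Fin n → ℝ) : Prop := (∀ i, 0 ≤ p i) ∧ ∑ i, p i = 1

/-- Simulability of the POVM set `N` by the POVM set `M` via classical
pre- and post-processing. -/
def Simulable {d l κ m τ : ℕ} (N : Fin τ → Fin m → Mat d)
    (M : Fin κ → Fin l → Mat d) : Prop :=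
  ∃ (nz : ℕ) (q : Fin nz → ℝ) (r : Fin τ → Fin nz → Fin κ → ℝ)
    (s : Fin τ → Fin nz → Fin l → Fin m → ℝ),
    IsPMF q ∧ (∀ y z, IsPMF (r y z)) ∧ (∀ y z a, IsPMF (s y z a)) ∧
    ∀ y b, N y b = ∑ z, ∑ x, ∑ a, (q z * r y z x * s y z a b) • M x a

/-- Compatibility (joint measurability) of a POVM set. -/
def Compatible {d l κ : ℕ} (M : Fin κ → Fin l → Mat d) : Prop :=
  ∃ (nl : ℕ) (G : Fin nl → Mat d) (pc : Fin κ → Fin nl → Fin l → ℝ),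
    (∀ i, (G i).PosSemidef) ∧ (∑ i, G i = 1) ∧ (∀ x lam, IsPMF (pc x lam)) ∧
    ∀ x a, M x a = ∑ lam, pc x lam a • G lam

/-- A subchannel: positive and trace-nonincreasing on PSD matrices. -/
def IsSubchannel {d : ℕ} (φ : Mat d →ₗ[ℂ] Mat d) : Prop :=
  (∀ A : Mat d, A.PosSemidef → (φ A).PosSemidef) ∧
  (∀ A : Mat d, A.PosSemidef → ((φ A).trace).re ≤ (A.trace).re)

/-- An instrument: subchannels summing to a trace-preserving map. -/
def IsInstrument {d m : ℕ} (Φ : Fin m → (Mat d →ₗ[ℂ] Mat d)) : Prop :=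
  (∀ b, IsSubchannel (Φ b)) ∧ (∀ A : Mat d, Matrix.trace (∑ b, Φ b A) = Matrix.trace A)

/-- A multi-object subchannel game: a PMF `p` with positive weights and a
family of instruments with common outcome set. -/
def IsGame {d m τ : ℕ} (p : Fin τ → ℝ) (Φ : Fin τ → Fin m → (Mat d →ₗ[ℂ] Mat d)) : Prop :=
  IsPMF p ∧ (∀ y, 0 < p y) ∧ (∀ y, IsInstrument (Φ y))

/-- The value `∑_{b,y} tr[N_{b|y} φ_{b|y}(ρ)] p(y)`. -/
def gameValue {d m τ : ℕ} (p : Fin τ → ℝ) (Φ : Fin τ → Fin m → (Mat d →ₗ[ℂ] Mat d))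
    (ρ : Mat d) (N : Fin τ → Fin m → Mat d) : ℝ :=
  ∑ y, ∑ b, p y * (Matrix.trace (N y b * Φ y b ρ)).re

/-- Success probability for discrimination. -/
def PsuccD {d l κ m τ : ℕ} (p : Fin τ → ℝ) (Φ : Fin τ → Fin m → (Mat d →ₗ[ℂ] Mat d))
    (ρ : Mat d) (M : Fin κ → Fin l → Mat d) : ℝ :=
  sSup {v : ℝ | ∃ N : Fin τ → Fin m → Mat d, Simulable N M ∧ v = gameValue p Φ ρ N}

/-- Error probability for exclusion. -/
def PerrE {d l κ m τ : ℕ} (p : Fin τ → ℝ) (Φ : Fin τ → Fin m → (Mat d →ₗ[ℂ] Mat d))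
    (ρ : Mat d) (M : Fin κ → Fin l → Mat d) : ℝ :=
  sInf {v : ℝ | ∃ N : Fin τ → Fin m → Mat d, Simulable N M ∧ v = gameValue p Φ ρ N}

/-- Free (normalised) states of a cone `𝓕`. -/
def freeStates {d : ℕ} (𝓕 : Set (Mat d)) : Set (Mat d) := {σ ∈ 𝓕 | Matrix.trace σ = 1}

/-- Feasible set for the generalised robustness of a state. -/
def RFSet {d : ℕ} (F : Set (Mat d)) (ρ : Mat d) : Set ℝ :=
  {r : ℝ | 0 ≤ r ∧ ∃ ρG σ : Mat d, IsState ρG ∧ σ ∈ F ∧ ρ + r • ρG = (1 + r) • σ}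

/-- Generalised robustness of a state. -/
def RF {d : ℕ} (F : Set (Mat d)) (ρ : Mat d) : ℝ := sInf (RFSet F ρ)

/-- Feasible set for the weight of resource of a state. -/
def WFSet {d : ℕ} (F : Set (Mat d)) (ρ : Mat d) : Set ℝ :=
  {w : ℝ | 0 ≤ w ∧ w ≤ 1 ∧ ∃ ρG σ : Mat d, IsState ρG ∧ σ ∈ F ∧ ρ = w • ρG + (1 - w) • σ}

/-- Weight of resource of a state. -/
def WF {d : ℕ} (F : Set (Mat d)) (ρ : Mat d) : ℝ := sInf (WFSet F ρ)

/-- Feasible set for the generalised robustness of a POVM set. -/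
def RFMSet {d l κ : ℕ} (𝔽 : Set (Fin κ → Fin l → Mat d))
    (M : Fin κ → Fin l → Mat d) : Set ℝ :=
  {r : ℝ | 0 ≤ r ∧ ∃ G Ff : Fin κ → Fin l → Mat d, IsPOVMSet G ∧ Ff ∈ 𝔽 ∧
     ∀ x a, M x a + r • G x a = (1 + r) • Ff x a}

/-- Generalised robustness of a POVM set. -/
def RFM {d l κ : ℕ} (𝔽 : Set (Fin κ → Fin l → Mat d)) (M : Fin κ → Fin l → Mat d) : ℝ :=
  sInf (RFMSet 𝔽 M)

/-- Feasible set for the weight of resource of a POVM set. -/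
def WFMSet {d l κ : ℕ} (𝔽 : Set (Fin κ → Fin l → Mat d))
    (M : Fin κ → Fin l → Mat d) : Set ℝ :=
  {w : ℝ | 0 ≤ w ∧ w ≤ 1 ∧ ∃ G Ff : Fin κ → Fin l → Mat d, IsPOVMSet G ∧ Ff ∈ 𝔽 ∧
     ∀ x a, M x a = w • G x a + (1 - w) • Ff x a}

/-- Weight of resource of a POVM set. -/
def WFM {d l κ : ℕ} (𝔽 : Set (Fin κ → Fin l → Mat d)) (M : Fin κ → Fin l → Mat d) : ℝ :=
  sInf (WFMSet 𝔽 M)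

/-- Conic hull of a set in a real module. -/
def conicHull {α : Type*} [AddCommMonoid α] [Module ℝ α] (S : Set α) : Set α :=
  {A | ∃ (n : ℕ) (c : Fin n → ℝ) (f : Fin n → α),
    (∀ i, 0 ≤ c i) ∧ (∀ i, f i ∈ S) ∧ A = ∑ i, c i • f i}

/-- `𝓕` is a closed convex cone of PSD matrices with at least one free state. -/
def IsFreeStateCone {d : ℕ} (𝓕 : Set (Mat d)) : Prop :=
  (∀ A ∈ 𝓕, Matrix.PosSemidef A) ∧
  (∀ A ∈ 𝓕, ∀ c : ℝ, 0 ≤ c → c • A ∈ 𝓕) ∧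
  (∀ A ∈ 𝓕, ∀ B ∈ 𝓕, A + B ∈ 𝓕) ∧
  IsClosed 𝓕 ∧ (freeStates 𝓕).Nonempty

/-- `𝔽` is a set of POVM sets whose conic hull is closed. -/
def GoodPOVMFree {d l κ : ℕ} (𝔽 : Set (Fin κ → Fin l → Mat d)) : Prop :=
  (∀ M ∈ 𝔽, IsPOVMSet M) ∧ IsClosed (conicHull 𝔽)

/-- The collection `𝔽` of free POVM sets is closed under simulability. -/
def ClosedUnderSim {d : ℕ} (𝔽 : ∀ l κ : ℕ, Set (Fin κ → Fin l → Mat d)) : Prop :=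
  ∀ {l κ m τ : ℕ} (M : Fin κ → Fin l → Mat d) (N : Fin τ → Fin m → Mat d),
    M ∈ 𝔽 l κ → Simulable N M → N ∈ 𝔽 m τ

/-- Best fully free success probability. -/
def Dbest {d l κ m τ : ℕ} (p : Fin τ → ℝ) (Φ : Fin τ → Fin m → (Mat d →ₗ[ℂ] Mat d))
    (F : Set (Mat d)) (𝔽 : Set (Fin κ → Fin l → Mat d)) : ℝ :=
  sSup {v : ℝ | ∃ (σ : Mat d) (N : Fin κ → Fin l → Mat d),
    σ ∈ F ∧ N ∈ 𝔽 ∧ v = PsuccD p Φ σ N}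

/-- Best fully free error probability. -/
def Ebest {d l κ m τ : ℕ} (p : Fin τ → ℝ) (Φ : Fin τ → Fin m → (Mat d →ₗ[ℂ] Mat d))
    (F : Set (Mat d)) (𝔽 : Set (Fin κ → Fin l → Mat d)) : ℝ :=
  sInf {v : ℝ | ∃ (σ : Mat d) (N : Fin κ → Fin l → Mat d),
    σ ∈ F ∧ N ∈ 𝔽 ∧ v = PerrE p Φ σ N}

/-- Operator norm of a PSD matrix via the variational characterisation
`‖Z‖_op = sup_{η state} tr[Z η]`. -/
def opNormPSD {d : ℕ} (Z : Mat d) : ℝ :=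
  sSup {v : ℝ | ∃ η : Mat d, IsState η ∧ v = (Matrix.trace (Z * η)).re}

/-- The linear map `η ↦ tr[Z η] • χ`. -/
def funMap {d : ℕ} (Z χ : Mat d) : Mat d →ₗ[ℂ] Mat d where
  toFun η := Matrix.trace (Z * η) • χ
  map_add' η₁ η₂ := by
    simp [Matrix.mul_add, add_smul]
  map_smul' c η := by
    simp [Matrix.mul_smul, smul_smul]

/-- The coefficient `α = 1/(‖Z^ρ‖_op ∑_{a,x} tr[Z_{a|x}] p(x)⁻¹)`. -/
def alphaConst {d l κ : ℕ} (Zr : Mat d) (Zm : Fin κ → Fin l → Mat d)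
    (p : Fin κ → ℝ) : ℝ :=
  (opNormPSD Zr * ∑ x, ∑ a, (Matrix.trace (Zm x a)).re / p x)⁻¹

/-- The function `F_y(η) = α tr[Z^ρ η] ∑_a tr[Z_{a|y}] p(y)⁻¹`. -/
def FyD {d l κ : ℕ} (Zr : Mat d) (Zm : Fin κ → Fin l → Mat d) (p : Fin κ → ℝ)
    (y : Fin κ) (η : Mat d) : ℝ :=
  alphaConst Zr Zm p * (Matrix.trace (Zr * η)).re * (∑ a, (Matrix.trace (Zm y a)).re) / p y

/-- The discrimination game built from dual-feasible operators. -/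
def discPsi {d l κ : ℕ} (Zr : Mat d) (Zm : Fin κ → Fin l → Mat d) (p : Fin κ → ℝ)
    (J : ℕ) (χ : Mat d) : Fin κ → Fin (l + J) → (Mat d →ₗ[ℂ] Mat d) :=
  fun y b =>
    if h : (b : ℕ) < l then
      (((alphaConst Zr Zm p) / p y : ℝ) : ℂ) • funMap Zr (Zm y ⟨b, h⟩)
    else
      ((J : ℂ))⁻¹ • (funMap 1 χ -
        (((alphaConst Zr Zm p) * (∑ a, (Matrix.trace (Zm y a)).re) / p y : ℝ) : ℂ) •
          funMap Zr χ)

/-- The coefficient `β = 1/(2‖Y^ρ‖_op ∑_{a,x} tr[Y_{a|x}] p(x)⁻¹)`. -/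
def betaConst {d l κ : ℕ} (Yr : Mat d) (Ym : Fin κ → Fin l → Mat d)
    (p : Fin κ → ℝ) : ℝ :=
  (2 * opNormPSD Yr * ∑ x, ∑ a, (Matrix.trace (Ym x a)).re / p x)⁻¹

/-- The function `G_y(η) = β tr[Y^ρ η] ∑_a tr[Y_{a|y}] p(y)⁻¹`. -/
def GyE {d l κ : ℕ} (Yr : Mat d) (Ym : Fin κ → Fin l → Mat d) (p : Fin κ → ℝ)
    (y : Fin κ) (η : Mat d) : ℝ :=
  betaConst Yr Ym p * (Matrix.trace (Yr * η)).re * (∑ a, (Matrix.trace (Ym y a)).re) / p y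

/-- The state `ξ_y = (∑_b p(b|y) Y_{b|y}) / (∑_b p(b|y) tr[Y_{b|y}])`. -/
def xiE {d l κ : ℕ} (Ym : Fin κ → Fin l → Mat d) (pc : Fin κ → Fin l → ℝ)
    (y : Fin κ) : Mat d :=
  ((∑ b, pc y b * (Matrix.trace (Ym y b)).re)⁻¹ : ℝ) • ∑ b, pc y b • Ym y b

/-- The exclusion game built from dual-feasible operators. -/
def exclPsi {d l κ : ℕ} (Yr : Mat d) (Ym : Fin κ → Fin l → Mat d) (p : Fin κ → ℝ)
    (pc : Fin κ → Fin l → ℝ) : Fin κ → Fin (l + 1) → (Mat d →ₗ[ℂ] Mat d) :=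
  fun y b =>
    if h : (b : ℕ) < l then
      ((betaConst Yr Ym p / p y : ℝ) : ℂ) • funMap Yr (Ym y ⟨b, h⟩)
    else
      funMap 1 (xiE Ym pc y) -
        ((betaConst Yr Ym p * (∑ a, (Matrix.trace (Ym y a)).re) / p y : ℝ) : ℂ) •
          funMap Yr (xiE Ym pc y)



section Helpers

lemma real_smul_eq' {d : ℕ} (r : ℝ) (M : Mat d) : r • M = (r : ℂ) • M := by
  ext i j; simp [Matrix.smul_apply, Complex.real_smul]

lemma smul_psd' {d : ℕ} {M : Mat d} (h : M.PosSemidef) {r : ℝ} (hr : 0 ≤ r) :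
    ((r : ℂ) • M).PosSemidef := by
  rw [Matrix.posSemidef_iff_dotProduct_mulVec]
  constructor
  · have h1 := h.1
    unfold Matrix.IsHermitian at *
    rw [Matrix.conjTranspose_smul, h1]
    congr 1
    simp
  · intro x
    rw [Matrix.smul_mulVec, dotProduct_smul]
    exact mul_nonneg (by exact_mod_cast hr) (h.dotProduct_mulVec_nonneg x)

lemma trace_psd_nonneg' {d : ℕ} {M : Mat d} (h : M.PosSemidef) : 0 ≤ Matrix.trace M := by
  rw [Matrix.trace]
  apply Finset.sum_nonneg
  intro i _
  exact h.diag_nonneg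

lemma trace_psd_re_nonneg' {d : ℕ} {M : Mat d} (h : M.PosSemidef) : 0 ≤ (Matrix.trace M).re := by
  have := trace_psd_nonneg' h
  rw [Complex.le_def] at this
  simpa using this.1

open scoped MatrixOrder in
lemma trace_mul_psd_nonneg' {d : ℕ} {A B : Mat d} (hA : A.PosSemidef) (hB : B.PosSemidef) :
    0 ≤ Matrix.trace (A * B) := by
  obtain ⟨C, hC⟩ := CStarAlgebra.nonneg_iff_eq_star_mul_self.mp hB.nonneg
  rw [Matrix.star_eq_conjTranspose] at hC
  have h1 : Matrix.trace (A * B) = Matrix.trace (C * A * C.conjTranspose) := by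
    rw [hC, ← Matrix.mul_assoc, Matrix.trace_mul_cycle]
  rw [h1]
  exact trace_psd_nonneg' (hA.mul_mul_conjTranspose_same C)

lemma trace_mul_psd_re' {d : ℕ} {A B : Mat d} (hA : A.PosSemidef) (hB : B.PosSemidef) :
    Matrix.trace (A * B) = (((Matrix.trace (A * B)).re : ℝ) : ℂ) := by
  have := trace_mul_psd_nonneg' hA hB
  rw [Complex.le_def] at this
  exact Complex.ext rfl (by simpa using this.2.symm)

lemma trace_mul_psd_re_nonneg' {d : ℕ} {A B : Mat d} (hA : A.PosSemidef) (hB : B.PosSemidef) :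
    0 ≤ (Matrix.trace (A * B)).re := by
  have := trace_mul_psd_nonneg' hA hB
  rw [Complex.le_def] at this
  simpa using this.1

lemma sum_psd' {d : ℕ} {ι : Type*} (s : Finset ι) (f : ι → Mat d)
    (h : ∀ i ∈ s, (f i).PosSemidef) : (∑ i ∈ s, f i).PosSemidef := by
  classical
  induction s using Finset.induction_on with
  | empty => simpa using Matrix.PosSemidef.zero
  | insert _ _ hni ih =>
      rw [Finset.sum_insert hni]
      exact (h _ (Finset.mem_insert_self _ _)).add
        (ih fun i hi => h i (Finset.mem_insert_of_mem hi))

lemma min_mul_le' {g u U : ℝ} (h0 : 0 ≤ u) (h1 : u ≤ U) : min 0 (g * U) ≤ g * u := by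
  rcases le_or_gt 0 g with hg | hg
  · exact (min_le_left _ _).trans (mul_nonneg hg h0)
  · exact (min_le_right _ _).trans (by nlinarith)

lemma simulable_isPOVMSet' {d l κ m τ : ℕ} {N : Fin τ → Fin m → Mat d}
    {M : Fin κ → Fin l → Mat d} (hM : IsPOVMSet M) (hsim : Simulable N M) :
    IsPOVMSet N := by
  obtain ⟨nz, q, r, s, hq, hr, hs, hN⟩ := hsim
  constructor
  · intro y b
    rw [hN]
    refine sum_psd' _ _ fun z _ => sum_psd' _ _ fun x _ => sum_psd' _ _ fun a _ => ?_
    rw [real_smul_eq']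
    exact smul_psd' (hM.1 x a)
      (mul_nonneg (mul_nonneg (hq.1 z) ((hr y z).1 x)) ((hs y z a).1 b))
  · intro y
    calc ∑ b, N y b
        = ∑ b, ∑ z, ∑ x, ∑ a, (q z * r y z x * s y z a b) • M x a := by
          exact Finset.sum_congr rfl fun b _ => hN y b
      _ = ∑ z, ∑ x, ∑ a, ∑ b, (q z * r y z x * s y z a b) • M x a := by
          rw [Finset.sum_comm]
          exact Finset.sum_congr rfl fun z _ => by
            rw [Finset.sum_comm]
            exact Finset.sum_congr rfl fun x _ => Finset.sum_comm
      _ = ∑ z, ∑ x, ∑ a, (q z * r y z x) • M x a := by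
          refine Finset.sum_congr rfl fun z _ => Finset.sum_congr rfl fun x _ =>
            Finset.sum_congr rfl fun a _ => ?_
          rw [← Finset.sum_smul, ← Finset.mul_sum, (hs y z a).2, mul_one]
      _ = ∑ z, ∑ x, (q z * r y z x) • (1 : Mat d) := by
          refine Finset.sum_congr rfl fun z _ => Finset.sum_congr rfl fun x _ => ?_
          rw [← Finset.smul_sum, hM.2 x]
      _ = ∑ z, q z • (1 : Mat d) := by
          refine Finset.sum_congr rfl fun z _ => ?_
          rw [← Finset.sum_smul, ← Finset.mul_sum, (hr y z).2, mul_one]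
      _ = 1 := by rw [← Finset.sum_smul, hq.2, one_smul]

end Helpers

/-- upper bound on the error probability of any state/POVM-set pair in
the constructed exclusion game. -/
theorem excl_game_resourceful_bound {d l κ : ℕ} (hd : 1 ≤ d)
    (𝓕 : Set (Mat d)) (h𝓕 : IsFreeStateCone 𝓕)
    (𝔽 : Set (Fin κ → Fin l → Mat d)) (h𝔽 : GoodPOVMFree 𝔽) (h𝔽ne : 𝔽.Nonempty)
    (Yr : Mat d) (hYr : Yr.PosSemidef)
    (hYrF : ∀ σ ∈ freeStates 𝓕, 1 ≤ (Matrix.trace (Yr * σ)).re)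
    (Ym : Fin κ → Fin l → Mat d) (hYm : ∀ x a, (Ym x a).PosSemidef)
    (hYmF : ∀ N ∈ 𝔽, 1 ≤ (∑ x, ∑ a, (Matrix.trace (Ym x a * N x a)).re))
    (p : Fin κ → ℝ) (hp : IsPMF p) (hppos : ∀ x, 0 < p x)
    (pc : Fin κ → Fin l → ℝ) (hpc : ∀ y, IsPMF (pc y))
    (hpcpos : ∀ y, 0 < ∑ b, pc y b * (Matrix.trace (Ym y b)).re)
    (ρ' : Mat d) (hρ' : IsState ρ')
    (M' : Fin κ → Fin l → Mat d) (hM' : IsPOVMSet M') :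
    PerrE p (exclPsi Yr Ym p pc) ρ' M' ≤
      betaConst Yr Ym p * (Matrix.trace (Yr * ρ')).re *
        (∑ y, ∑ b, (Matrix.trace (M' y b * Ym y b)).re) := by
  classical
  obtain ⟨hρpsd, hρtr⟩ := hρ'
  set β := betaConst Yr Ym p with hβdef
  set t := (Matrix.trace (Yr * ρ')).re with htdef
  have ht0 : 0 ≤ t := trace_mul_psd_re_nonneg' hYr hρpsd
  have htC : Matrix.trace (Yr * ρ') = (t : ℂ) := trace_mul_psd_re' hYr hρpsd
  have hop : 0 ≤ opNormPSD Yr := by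
    apply Real.sSup_nonneg
    rintro v ⟨η, hη, rfl⟩
    exact trace_mul_psd_re_nonneg' hYr hη.1
  have hβ0 : 0 ≤ β := by
    rw [hβdef, betaConst]
    apply inv_nonneg.mpr
    apply mul_nonneg (by linarith)
    refine Finset.sum_nonneg fun x _ => Finset.sum_nonneg fun a _ => ?_
    exact div_nonneg (trace_psd_re_nonneg' (hYm x a)) (hppos x).le
  have hξpsd : ∀ y, (xiE Ym pc y).PosSemidef := by
    intro y
    rw [xiE, real_smul_eq']
    refine smul_psd' (sum_psd' _ _ fun b _ => ?_) (inv_nonneg.mpr (hpcpos y).le)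
    rw [real_smul_eq']
    exact smul_psd' (hYm y b) ((hpc y).1 b)
  -- application of the game maps
  have happly_lt : ∀ (y : Fin κ) (b : Fin l) (η : Mat d),
      (exclPsi Yr Ym p pc y b.castSucc) η
        = ((β / p y : ℝ) : ℂ) • Matrix.trace (Yr * η) • Ym y b := by
    intro y b η
    have hb : ((b.castSucc : Fin (l+1)) : ℕ) < l := by simpa using b.isLt
    simp only [exclPsi, dif_pos hb]
    simp [funMap]
    rfl
  have happly_last : ∀ (y : Fin κ),
      (exclPsi Yr Ym p pc y (Fin.last l)) ρ'
        = ((1 - GyE Yr Ym p y ρ' : ℝ) : ℂ) • xiE Ym pc y := by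
    intro y
    have hb : ¬ ((Fin.last l : Fin (l+1)) : ℕ) < l := by simp
    simp only [exclPsi, dif_neg hb]
    simp only [LinearMap.sub_apply, LinearMap.smul_apply, funMap, LinearMap.coe_mk,
      AddHom.coe_mk]
    rw [Matrix.one_mul, hρtr, htC, GyE]
    rw [smul_smul, ← sub_smul]
    congr 1
    push_cast
    ring
  -- the set in the definition of PerrE
  have hbdd : BddBelow {v : ℝ | ∃ N : Fin κ → Fin (l+1) → Mat d,
      Simulable N M' ∧ v = gameValue p (exclPsi Yr Ym p pc) ρ' N} := by
    refine ⟨∑ y, p y * min 0 ((1 - GyE Yr Ym p y ρ') * (Matrix.trace (xiE Ym pc y)).re), ?_⟩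
    rintro v ⟨N, hsim, rfl⟩
    have hNpovm := simulable_isPOVMSet' hM' hsim
    rw [gameValue]
    apply Finset.sum_le_sum
    intro y _
    rw [Fin.sum_univ_castSucc]
    have h1 : ∀ b : Fin l,
        0 ≤ p y * (Matrix.trace (N y b.castSucc * (exclPsi Yr Ym p pc y b.castSucc) ρ')).re := by
      intro b
      apply mul_nonneg (hp.1 y)
      rw [happly_lt, htC, smul_smul]
      have hc : ((β / p y : ℝ) : ℂ) * (t : ℂ) = ((β / p y * t : ℝ) : ℂ) := by push_cast; ring
      rw [hc]
      exact trace_mul_psd_re_nonneg' (hNpovm.1 y _)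
        (smul_psd' (hYm y b) (mul_nonneg (div_nonneg hβ0 (hppos y).le) ht0))
    have hlast : p y * min 0 ((1 - GyE Yr Ym p y ρ') * (Matrix.trace (xiE Ym pc y)).re)
        ≤ p y * (Matrix.trace (N y (Fin.last l) * (exclPsi Yr Ym p pc y (Fin.last l)) ρ')).re := by
      apply mul_le_mul_of_nonneg_left ?_ (hp.1 y)
      rw [happly_last, mul_smul_comm, Matrix.trace_smul, smul_eq_mul, Complex.re_ofReal_mul]
      have hu0 : 0 ≤ (Matrix.trace (N y (Fin.last l) * xiE Ym pc y)).re :=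
        trace_mul_psd_re_nonneg' (hNpovm.1 y _) (hξpsd y)
      have hsub : ((1 : Mat d) - N y (Fin.last l)).PosSemidef := by
        have h2 : (1 : Mat d) - N y (Fin.last l)
            = ∑ b ∈ Finset.univ.erase (Fin.last l), N y b := by
          have h3 := hNpovm.2 y
          rw [← Finset.add_sum_erase Finset.univ (N y) (Finset.mem_univ (Fin.last l))] at h3
          linear_combination (norm := abel) h3.symm
        rw [h2]
        exact sum_psd' _ _ fun b _ => hNpovm.1 y b
      have huU : (Matrix.trace (N y (Fin.last l) * xiE Ym pc y)).re
          ≤ (Matrix.trace (xiE Ym pc y)).re := by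
        have hd := trace_mul_psd_re_nonneg' hsub (hξpsd y)
        rw [Matrix.sub_mul, Matrix.one_mul, Matrix.trace_sub] at hd
        simpa using hd
      exact min_mul_le' hu0 huU
    have h2 := Finset.sum_nonneg fun b (_ : b ∈ Finset.univ) => h1 b
    linarith
  -- the explicit simulable strategy
  set N₀ : Fin κ → Fin (l+1) → Mat d :=
    fun y b => if h : (b : ℕ) < l then M' y ⟨b, h⟩ else 0 with hN₀
  have hsim0 : Simulable N₀ M' := by
    refine ⟨1, fun _ => 1, fun y z x => if x = y then 1 else 0,
      fun y z a b => if (b : ℕ) = (a : ℕ) then 1 else 0,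
      ⟨fun _ => zero_le_one, by simp⟩,
      fun y z => ⟨fun x => by positivity, by simp⟩,
      fun y z a => ⟨fun b => by positivity, ?_⟩, ?_⟩
    · show ∑ b : Fin (l+1), (if (b : ℕ) = (a : ℕ) then (1:ℝ) else 0) = 1
      have hiff : ∀ b : Fin (l+1), ((b : ℕ) = (a : ℕ)) ↔ (b = a.castSucc) := by
        intro b
        constructor
        · intro h; exact Fin.ext (by simpa using h)
        · intro h; subst h; simp
      rw [Finset.sum_congr rfl fun b _ => by rw [if_congr (hiff b) rfl rfl]]
      simp
    · intro y b
      show N₀ y b = ∑ z : Fin 1, ∑ x : Fin κ, ∑ a : Fin l,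
        ((1:ℝ) * (if x = y then 1 else 0) * (if (b : ℕ) = (a : ℕ) then 1 else 0)) • M' x a
      rw [Fin.sum_univ_one]
      have hstep : ∀ x : Fin κ, (∑ a : Fin l,
          ((1:ℝ) * (if x = y then 1 else 0) * (if (b : ℕ) = (a : ℕ) then 1 else 0)) • M' x a)
          = if x = y then (∑ a : Fin l, (if (b : ℕ) = (a : ℕ) then (1:ℝ) else 0) • M' x a) else 0 := by
        intro x
        split_ifs with hxy
        · simp
        · simp
      rw [Finset.sum_congr rfl fun x _ => hstep x, Finset.sum_ite_eq' Finset.univ y]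
      simp only [Finset.mem_univ, if_true]
      by_cases h : (b : ℕ) < l
      · have hb : N₀ y b = M' y ⟨(b : ℕ), h⟩ := by simp only [hN₀]; rw [dif_pos h]
        rw [hb]
        have hiff : ∀ a : Fin l, ((b : ℕ) = (a : ℕ)) ↔ (a = (⟨(b : ℕ), h⟩ : Fin l)) := by
          intro a
          constructor
          · intro hh; exact Fin.ext (by simpa using hh.symm)
          · intro hh; subst hh; rfl
        rw [Finset.sum_congr rfl fun a _ => by rw [if_congr (hiff a) rfl rfl]]
        simp [Finset.sum_ite_eq']
      · have hb : N₀ y b = 0 := by simp only [hN₀]; rw [dif_neg h]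
        rw [hb]
        symm
        apply Finset.sum_eq_zero
        intro a _
        have hne : ¬ ((b : ℕ) = (a : ℕ)) := by have := a.isLt; omega
        simp [hne]
  have hval : gameValue p (exclPsi Yr Ym p pc) ρ' N₀
      = β * t * (∑ y, ∑ b, (Matrix.trace (M' y b * Ym y b)).re) := by
    rw [gameValue, Finset.mul_sum]
    refine Finset.sum_congr rfl fun y _ => ?_
    rw [Fin.sum_univ_castSucc]
    have hlast0 : N₀ y (Fin.last l) = 0 := by
      rw [hN₀]; simp
    rw [hlast0]
    simp only [Matrix.zero_mul, Matrix.trace_zero, Complex.zero_re, mul_zero, add_zero]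
    rw [Finset.mul_sum]
    refine Finset.sum_congr rfl fun b _ => ?_
    have hcast : N₀ y b.castSucc = M' y b := by
      rw [hN₀]
      have hb : ((b.castSucc : Fin (l+1)) : ℕ) < l := by simpa using b.isLt
      simp only [dif_pos hb]
      congr 1
    rw [hcast, happly_lt, htC, smul_smul]
    have hc : ((β / p y : ℝ) : ℂ) * (t : ℂ) = ((β / p y * t : ℝ) : ℂ) := by push_cast; ring
    rw [hc, mul_smul_comm, Matrix.trace_smul, smul_eq_mul, Complex.re_ofReal_mul]
    have hpy := (hppos y).ne'
    field_simp
  have hmem : β * t * (∑ y, ∑ b, (Matrix.trace (M' y b * Ym y b)).re)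
      ∈ {v : ℝ | ∃ N : Fin κ → Fin (l+1) → Mat d,
        Simulable N M' ∧ v = gameValue p (exclPsi Yr Ym p pc) ρ' N} :=
    ⟨N₀, hsim0, hval.symm⟩
  exact csInf_le hbdd hmem

end MultiObject
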